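/- Let X be an odd or even involutive FL_e-chain and u a positive idempotent of X such that u' is not idempotent. Then the layer L_u = {x ∈ X : x→x = u}, equipped with the restriction of the multiplication · of X, the unit u, the inversion x ↦ x→u, and the restriction of the order ≤ of X, is a discretely ordered totally ordered abelian group (every element of L_u has an upper cover and a lower cover within L_u). -/
import Mathlib


open Classical

universe u v

/-- An FL_e-chain: a totally ordered commutative monoid with a residuation operation
`imp` (so that `x * y ≤ z ↔ y ≤ imp x z`) and a falsum constant `fc`.
The monoid unit `1` plays the role of the constant `t`. -/
class FLeChain (X : Type u) extends LinearOrder X, CommMonoid X where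
  imp : X → X → X
  fc : X
  residuation : ∀ x y z : X, x * y ≤ z ↔ y ≤ imp x z

namespace FLe

variable {X : Type u}

/-- The residual `x → y`. -/
def imp [FLeChain X] (x y : X) : X := FLeChain.imp x y

/-- The falsum constant `f`. -/
def fc (X : Type u) [FLeChain X] : X := FLeChain.fc

/-- The residual complement `x' = x → f`. -/
def compl [FLeChain X] (x : X) : X := imp x (fc X)

/-- An FL_e-chain is involutive if `x'' = x` for all `x`. -/
def Involutive (X : Type u) [FLeChain X] : Prop := ∀ x : X, compl (compl x) = x

/-- An involutive FL_e-chain is odd if `t' = t`. -/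
def OddChain (X : Type u) [FLeChain X] : Prop := compl (1 : X) = 1

/-- An involutive FL_e-chain is even if `x < t ↔ x ≤ f` for all `x`. -/
def EvenChain (X : Type u) [FLeChain X] : Prop := ∀ x : X, x < 1 ↔ x ≤ fc X

/-- Odd or even involutive FL_e-chain. -/
def OddEven (X : Type u) [FLeChain X] : Prop := Involutive X ∧ (OddChain X ∨ EvenChain X)

/-- `x` is idempotent. -/
def IsIdem [Mul X] (x : X) : Prop := x * x = x

/-- Homomorphisms of FL_e-chains: order preserving, multiplicative, residual preserving,
and preserving both constants. -/
def IsFLeHom (X : Type u) (Y : Type v) [FLeChain X] [FLeChain Y] (φ : X → Y) : Prop :=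
  Monotone φ ∧ (∀ a b : X, φ (a * b) = φ a * φ b) ∧
    (∀ a b : X, φ (imp a b) = imp (φ a) (φ b)) ∧ φ (1 : X) = 1 ∧ φ (fc X) = fc Y

/-- The skeleton `κ`: the set of positive idempotent elements. -/
def kappa (X : Type u) [FLeChain X] : Set X := {u : X | 1 ≤ u ∧ IsIdem u}

/-- `κ_o`: it is `{t}` if the chain is odd, empty otherwise. -/
def kappaO (X : Type u) [FLeChain X] : Set X := {u : X | u = 1 ∧ OddChain X}

/-- The layer `L_u = {x : x → x = u}`. -/
def layer [FLeChain X] (u : X) : Set X := {x : X | imp x x = u}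

/-- `H_u = {x ∈ L_u : x · u' < x}`, the set of `u`-invertible elements of the layer. -/
def Hs [FLeChain X] (u : X) : Set X := {x : X | x ∈ layer u ∧ x * compl u < x}

/-- The dotted copy `•H_u = {x · u' : x ∈ H_u}`. -/
def dotH [FLeChain X] (u : X) : Set X := (fun x => x * compl u) '' Hs u

/-- `u ∈ κ_I`: a positive idempotent whose complement is idempotent, not in `κ_o`. -/
def inKI [FLeChain X] (u : X) : Prop := u ∈ kappa X ∧ IsIdem (compl u) ∧ u ∉ kappaO X

/-- `u ∈ κ_J`: a positive idempotent whose complement is not idempotent. -/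
def inKJ [FLeChain X] (u : X) : Prop := u ∈ kappa X ∧ ¬ IsIdem (compl u)

/-- The layer group carrier: `G_u = L_u \ •H_u` if `u ∈ κ_I`, and `G_u = L_u` otherwise. -/
def Gs [FLeChain X] (u : X) : Set X := {x : X | x ∈ layer u ∧ (inKI u → x ∉ dotH u)}

/-- The layer group multiplication: `x ·_u y = ((x·y)→u)→u` if `u ∈ κ_I`, `x·y` otherwise. -/
noncomputable def gmul [FLeChain X] (u x y : X) : X :=
  if inKI u then imp (imp (x * y) u) u else x * y

/-- The layer group inversion `x^{-1_u} = x → u`. -/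
def ginv [FLeChain X] (u x : X) : X := imp x u

/-- The union of all layer group carriers. -/
def GX (X : Type u) [FLeChain X] : Set X := ⋃ u ∈ kappa X, Gs u

end FLe

open FLe

section Auxiliary

open FLe

variable {X : Type u} [FLeChain X]

theorem FLe.resid {x y z : X} : x * y ≤ z ↔ y ≤ imp x z :=
  FLeChain.residuation x y z

theorem FLe.mul_imp_le (x z : X) : x * imp x z ≤ z := resid.mpr le_rfl

theorem FLe.mul_le_left {x y : X} (z : X) (h : x ≤ y) : z * x ≤ z * y :=
  resid.mpr (h.trans (resid.mp (le_refl (z * y))))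

theorem FLe.mul_le_right {x y : X} (z : X) (h : x ≤ y) : x * z ≤ y * z := by
  rw [mul_comm x z, mul_comm y z]; exact mul_le_left z h

theorem FLe.mul_rearrange (a b c : X) : a * (b * c) = (a * c) * b := by
  rw [mul_comm b c, ← mul_assoc]

theorem FLe.compl_anti {x y : X} (h : x ≤ y) : compl y ≤ compl x := by
  show compl y ≤ imp x (fc X)
  apply resid.mp
  calc x * compl y ≤ y * compl y := mul_le_right _ h
    _ ≤ fc X := mul_imp_le y (fc X)

theorem FLe.compl_one : compl (1 : X) = fc X := by
  apply le_antisymm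
  · have := mul_imp_le (1 : X) (fc X); rwa [one_mul] at this
  · exact resid.mp (one_mul (fc X)).le

theorem FLe.compl_mul (a b : X) : compl (a * b) = imp a (compl b) := by
  apply le_antisymm
  · apply resid.mp; apply resid.mp
    calc b * (a * compl (a * b)) = (a * b) * compl (a * b) := by
          rw [← mul_assoc, mul_comm b a]
      _ ≤ fc X := mul_imp_le _ _
  · apply resid.mp
    calc (a * b) * imp a (compl b) = b * (a * imp a (compl b)) := by
          rw [← mul_assoc, mul_comm b a]
      _ ≤ b * compl b := mul_le_left _ (mul_imp_le _ _)
      _ ≤ fc X := mul_imp_le b (fc X)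

theorem FLe.imp_eq (hI : Involutive X) (x y : X) :
    imp x y = compl (x * compl y) := by
  apply le_antisymm
  · apply resid.mp
    calc (x * compl y) * imp x y = compl y * (x * imp x y) := by
          rw [← mul_assoc, mul_comm (compl y) x]
      _ ≤ compl y * y := mul_le_left _ (mul_imp_le x y)
      _ = y * compl y := mul_comm _ _
      _ ≤ fc X := mul_imp_le y (fc X)
  · apply resid.mp
    have h1 : x * compl (x * compl y) ≤ compl (compl y) := by
      apply resid.mp
      calc compl y * (x * compl (x * compl y))
          = (x * compl y) * compl (x * compl y) := by
            rw [← mul_assoc, mul_comm (compl y) x]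
        _ ≤ fc X := mul_imp_le _ _
    rwa [hI y] at h1

theorem FLe.compl_imp (hI : Involutive X) (x y : X) :
    compl (imp x y) = x * compl y := by
  rw [imp_eq hI, hI]

theorem FLe.le_of_mul_compl_le (hI : Involutive X) {a b : X}
    (hab : a * compl b ≤ fc X) : a ≤ b := by
  have h1 : a ≤ compl (compl b) := resid.mp (by rwa [mul_comm] at hab)
  rwa [hI b] at h1

theorem FLe.fc_le_one (h : OddEven X) : fc X ≤ 1 := by
  rcases h.2 with ho | he
  · rw [← compl_one]; exact ho.le
  · exact ((he (fc X)).mpr le_rfl).le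

theorem FLe.one_le_of_not_le_fc (h : OddEven X) {c : X} (hc : ¬ c ≤ fc X) :
    (1 : X) ≤ c := by
  rcases h.2 with ho | he
  · have hf : fc X = 1 := compl_one.symm.trans ho
    rw [hf] at hc
    exact (not_le.mp hc).le
  · by_contra h1
    exact hc ((he c).mp (not_le.mp h1))

theorem FLe.layer_unit {u x : X} (hu1 : (1 : X) ≤ u) (hx : x ∈ layer u) :
    u * x = x := by
  have hx' : imp x x = u := hx
  apply le_antisymm
  · rw [← hx', mul_comm]; exact mul_imp_le x x
  · calc x = 1 * x := (one_mul x).symm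
      _ ≤ u * x := mul_le_right x hu1

theorem FLe.u_mem {u : X} (hu : u ∈ kappa X) : u ∈ layer u := by
  show imp u u = u
  apply le_antisymm
  · calc imp u u = 1 * imp u u := (one_mul _).symm
      _ ≤ u * imp u u := mul_le_right _ hu.1
      _ ≤ u := mul_imp_le u u
  · exact resid.mp hu.2.le

theorem FLe.mul_compl_self (hI : Involutive X) {u x : X} (hx : x ∈ layer u) :
    x * compl x = compl u := by
  have hx' : imp x x = u := hx
  rw [← compl_imp hI x x, hx']

theorem FLe.compl_mem (hI : Involutive X) {u x : X} (hx : x ∈ layer u) :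
    compl x ∈ layer u := by
  show imp (compl x) (compl x) = u
  rw [imp_eq hI, hI x, mul_comm, mul_compl_self hI hx, hI u]

theorem FLe.compl_u_le_fc {u : X} (hu1 : (1 : X) ≤ u) : compl u ≤ fc X := by
  have := compl_anti hu1; rwa [compl_one] at this

theorem FLe.compl_u_le_one (h : OddEven X) {u : X} (hu1 : (1 : X) ≤ u) :
    compl u ≤ 1 :=
  (compl_u_le_fc hu1).trans (fc_le_one h)

theorem FLe.mul_compl_lt (h : OddEven X) {u x : X} (hu : u ∈ kappa X)
    (hni : ¬ IsIdem (compl u)) (hx : x ∈ layer u) : x * compl u < x := by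
  have hle : x * compl u ≤ x := by
    calc x * compl u ≤ x * 1 := mul_le_left x (compl_u_le_one h hu.1)
      _ = x := mul_one x
  refine lt_of_le_of_ne hle ?_
  intro he
  apply hni
  show compl u * compl u = compl u
  calc compl u * compl u = compl u * (x * compl x) := by rw [mul_compl_self h.1 hx]
    _ = (x * compl u) * compl x := by rw [← mul_assoc, mul_comm (compl u) x]
    _ = x * compl x := by rw [he]
    _ = compl u := mul_compl_self h.1 hx

/-- The key group property: every element of a `κ_J`-layer is invertible. -/
theorem FLe.key (h : OddEven X) {u x : X} (hu : u ∈ kappa X)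
    (hni : ¬ IsIdem (compl u)) (hx : x ∈ layer u) : x * imp x u = u := by
  have hI := h.1
  have hgle : x * imp x u ≤ u := mul_imp_le x u
  have hlt : x * compl u < x := mul_compl_lt h hu hni hx
  have h1 : ¬ x * compl (x * compl u) ≤ fc X := by
    intro hc
    exact absurd (le_of_mul_compl_le hI hc) (not_le.mpr hlt)
  rw [← imp_eq hI] at h1
  have h1g : (1 : X) ≤ x * imp x u := one_le_of_not_le_fc h h1
  have hsle : compl (x * imp x u) ≤ fc X := by
    have := compl_anti h1g; rwa [compl_one] at this
  have e2 : compl (x * imp x u) = imp x (x * compl u) := by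
    rw [compl_mul, compl_imp hI]
  have hux : u * x = x := layer_unit hu.1 hx
  have hus : u * imp x (x * compl u) ≤ imp x (x * compl u) := by
    apply resid.mp
    calc x * (u * imp x (x * compl u)) = u * (x * imp x (x * compl u)) :=
          mul_left_comm x u _
      _ ≤ u * (x * compl u) := mul_le_left u (mul_imp_le x _)
      _ = (u * x) * compl u := (mul_assoc u x _).symm
      _ = x * compl u := by rw [hux]
  refine le_antisymm hgle ?_
  by_contra hug
  have h2 : ¬ u * compl (x * imp x u) ≤ fc X := fun hc =>
    hug (le_of_mul_compl_le hI hc)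
  apply h2
  rw [e2] at hsle ⊢
  exact hus.trans hsle

theorem FLe.inv_mem (h : OddEven X) {u x : X} (hu : u ∈ kappa X)
    (hni : ¬ IsIdem (compl u)) (hx : x ∈ layer u) : imp x u ∈ layer u := by
  show imp (imp x u) (imp x u) = u
  apply le_antisymm
  · have h1 : (imp x u) * imp (imp x u) (imp x u) ≤ imp x u :=
      mul_imp_le _ _
    have h2 : (x * imp x u) * imp (imp x u) (imp x u) ≤ x * imp x u := by
      calc (x * imp x u) * imp (imp x u) (imp x u)
          = x * ((imp x u) * imp (imp x u) (imp x u)) := mul_assoc _ _ _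
        _ ≤ x * imp x u := mul_le_left x h1
    rw [key h hu hni hx] at h2
    calc imp (imp x u) (imp x u) = 1 * imp (imp x u) (imp x u) := (one_mul _).symm
      _ ≤ u * imp (imp x u) (imp x u) := mul_le_right _ hu.1
      _ ≤ u := h2
  · apply resid.mp
    calc (imp x u) * u = u * imp x u := mul_comm _ _
      _ ≤ imp x u := by
          apply resid.mp
          calc x * (u * imp x u) = u * (x * imp x u) := mul_left_comm x u _
            _ ≤ u * u := mul_le_left u (mul_imp_le x u)
            _ = u := hu.2

theorem FLe.mul_mem (h : OddEven X) {u x y : X} (hu : u ∈ kappa X)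
    (hni : ¬ IsIdem (compl u)) (hx : x ∈ layer u) (hy : y ∈ layer u) :
    x * y ∈ layer u := by
  show imp (x * y) (x * y) = u
  have e1 : (x * y) * (imp x u * imp y u) = u := by
    calc (x * y) * (imp x u * imp y u)
        = (x * imp x u) * (y * imp y u) := mul_mul_mul_comm x y _ _
      _ = u * u := by rw [key h hu hni hx, key h hu hni hy]
      _ = u := hu.2
  apply le_antisymm
  · have h1 : (x * y) * imp (x * y) (x * y) ≤ x * y := mul_imp_le _ _
    calc imp (x * y) (x * y) = 1 * imp (x * y) (x * y) := (one_mul _).symm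
      _ ≤ u * imp (x * y) (x * y) := mul_le_right _ hu.1
      _ = ((x * y) * (imp x u * imp y u)) * imp (x * y) (x * y) := by rw [e1]
      _ = ((x * y) * imp (x * y) (x * y)) * (imp x u * imp y u) :=
          mul_right_comm _ _ _
      _ ≤ (x * y) * (imp x u * imp y u) := mul_le_right _ h1
      _ = u := e1
  · apply resid.mp
    calc (x * y) * u = x * (u * y) := by rw [mul_assoc, mul_comm y u]
      _ = x * y := by rw [layer_unit hu.1 hy]
      _ ≤ x * y := le_rfl

/-- No element of the layer lies strictly between `u'` and `u`. -/
theorem FLe.gap (h : OddEven X) {u v : X} (hu : u ∈ kappa X)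
    (hni : ¬ IsIdem (compl u)) (hv : v ∈ layer u) (h1 : ¬ u ≤ v) :
    v ≤ compl u := by
  have hI := h.1
  by_contra h2
  have huv : u * v = v := layer_unit hu.1 hv
  have h3 : ¬ v * compl (compl u) ≤ fc X := fun hc =>
    h2 (le_of_mul_compl_le hI hc)
  rw [hI u, mul_comm, huv] at h3
  have h4 : (1 : X) ≤ v := one_le_of_not_le_fc h h3
  have hcv : compl v ∈ layer u := compl_mem hI hv
  have h5 : ¬ u * compl v ≤ fc X := fun hc => h1 (le_of_mul_compl_le hI hc)
  rw [layer_unit hu.1 hcv] at h5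
  have h6 : (1 : X) ≤ compl v := one_le_of_not_le_fc h h5
  have h7 : (1 : X) ≤ compl u := by
    calc (1 : X) = 1 * 1 := (one_mul 1).symm
      _ ≤ v * compl v := le_trans (mul_le_right 1 h4) (mul_le_left v h6)
      _ = compl u := mul_compl_self hI hv
  have h8 : compl u ≤ fc X := compl_u_le_fc hu.1
  rcases h.2 with ho | he
  · apply hni
    have hf : fc X = 1 := compl_one.symm.trans ho
    have hcu : compl u = 1 := le_antisymm (h8.trans hf.le) h7
    show compl u * compl u = compl u
    rw [hcu, one_mul]
  · exact absurd h7 (not_le.mpr (lt_of_le_of_lt h8 ((he (fc X)).mpr le_rfl)))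

theorem FLe.cancel_eq (h : OddEven X) {u x z : X} (hu : u ∈ kappa X)
    (hni : ¬ IsIdem (compl u)) (hx : x ∈ layer u) (hz : z ∈ layer u)
    (he : z * imp x u = u) : z = x := by
  calc z = u * z := (layer_unit hu.1 hz).symm
    _ = (x * imp x u) * z := by rw [key h hu hni hx]
    _ = z * (x * imp x u) := mul_comm _ _
    _ = (z * imp x u) * x := mul_rearrange _ _ _
    _ = u * x := by rw [he]
    _ = x := layer_unit hu.1 hx

theorem FLe.compl_u_mem (h : OddEven X) {u : X} (hu : u ∈ kappa X) :
    compl u ∈ layer u := compl_mem h.1 (u_mem hu)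

theorem FLe.q_gt (h : OddEven X) {u : X} (hu : u ∈ kappa X)
    (hni : ¬ IsIdem (compl u)) : ¬ imp (compl u) u ≤ u := by
  intro hq
  apply hni
  have hcq : compl (imp (compl u) u) = compl u * compl u :=
    compl_imp h.1 (compl u) u
  have hsq : compl u * compl u ≤ compl u := by
    calc compl u * compl u ≤ 1 * compl u :=
          mul_le_right _ (compl_u_le_one h hu.1)
      _ = compl u := one_mul _
  have := compl_anti hq
  rw [hcq] at this
  exact le_antisymm hsq this

theorem FLe.q_inv (h : OddEven X) {u : X} (hu : u ∈ kappa X)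
    (hni : ¬ IsIdem (compl u)) : imp (imp (compl u) u) u = compl u := by
  have hk : compl u * imp (compl u) u = u := key h hu hni (compl_u_mem h hu)
  apply le_antisymm
  · calc imp (imp (compl u) u) u = 1 * imp (imp (compl u) u) u := (one_mul _).symm
      _ ≤ u * imp (imp (compl u) u) u := mul_le_right _ hu.1
      _ = (compl u * imp (compl u) u) * imp (imp (compl u) u) u := by rw [hk]
      _ = compl u * ((imp (compl u) u) * imp (imp (compl u) u) u) := mul_assoc _ _ _
      _ ≤ compl u * u := mul_le_left _ (mul_imp_le _ _)
      _ = u * compl u := mul_comm _ _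
      _ = compl u := layer_unit hu.1 (compl_u_mem h hu)
  · apply resid.mp
    rw [mul_comm]
    exact hk.le

/-- Every layer element strictly above `u` is at least `q = u' → u`. -/
theorem FLe.q_min (h : OddEven X) {u v : X} (hu : u ∈ kappa X)
    (hni : ¬ IsIdem (compl u)) (hv : v ∈ layer u) (h1 : ¬ v ≤ u) :
    imp (compl u) u ≤ v := by
  have hI := h.1
  have hk : compl u * imp (compl u) u = u := key h hu hni (compl_u_mem h hu)
  have hcv : compl v ∈ layer u := compl_mem hI hv
  have hvu : u ≤ v := (not_le.mp h1).le
  have h2 : compl v * imp (compl u) u ≤ u := by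
    calc compl v * imp (compl u) u ≤ compl u * imp (compl u) u :=
          mul_le_right _ (compl_anti hvu)
      _ = u := hk
  have h3 : compl v * imp (compl u) u ≠ u := by
    intro he
    have e1 : compl v = compl u := by
      calc compl v = u * compl v := (layer_unit hu.1 hcv).symm
        _ = compl v * u := mul_comm _ _
        _ = compl v * (compl u * imp (compl u) u) := by rw [hk]
        _ = (compl v * imp (compl u) u) * compl u :=
            mul_rearrange _ _ _
        _ = u * compl u := by rw [he]
        _ = compl u := layer_unit hu.1 (compl_u_mem h hu)
    apply h1
    rw [← hI v, e1, hI u]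
  have h4 : compl v * imp (compl u) u ∈ layer u :=
    mul_mem h hu hni hcv (inv_mem h hu hni (compl_u_mem h hu))
  have h5 : compl v * imp (compl u) u ≤ compl u :=
    gap h hu hni h4 (fun hle => h3 (le_antisymm h2 hle))
  have h6 : compl v ≤ compl u * compl u := by
    calc compl v = u * compl v := (layer_unit hu.1 hcv).symm
      _ = compl v * u := mul_comm _ _
      _ = compl v * ((imp (compl u) u) * imp (imp (compl u) u) u) := by
          rw [key h hu hni (inv_mem h hu hni (compl_u_mem h hu))]
      _ = (compl v * imp (compl u) u) * imp (imp (compl u) u) u :=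
          (mul_assoc _ _ _).symm
      _ = (compl v * imp (compl u) u) * compl u := by rw [q_inv h hu hni]
      _ ≤ compl u * compl u := mul_le_right _ h5
  have hcq : compl (imp (compl u) u) = compl u * compl u :=
    compl_imp hI (compl u) u
  calc imp (compl u) u = compl (compl (imp (compl u) u)) :=
        (hI (imp (compl u) u)).symm
    _ = compl (compl u * compl u) := by rw [hcq]
    _ ≤ compl (compl v) := compl_anti h6
    _ = v := hI v

end Auxiliary

/-- If `u` is a positive idempotent of an odd or even involutive FL_e-chain
such that `u'` is not idempotent, then the layer `L_u`, with the restricted multiplication,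
unit `u`, inversion `x ↦ x→u` and the restricted order, is a discretely ordered totally
ordered abelian group (every element of `L_u` has an upper and a lower cover in `L_u`). -/
theorem kJ_layer_is_discrete_group {X : Type u} [FLeChain X] (h : OddEven X)
    (u : X) (hu : u ∈ kappa X) (hni : ¬ IsIdem (compl u)) :
    -- closure under multiplication
    (∀ x ∈ layer u, ∀ y ∈ layer u, x * y ∈ layer u) ∧
    -- `u` is the unit element
    u ∈ layer u ∧ (∀ x ∈ layer u, u * x = x) ∧
    -- inverses
    (∀ x ∈ layer u, imp x u ∈ layer u ∧ x * imp x u = u) ∧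
    -- multiplication is compatible with the (restricted, total) order
    (∀ x ∈ layer u, ∀ y ∈ layer u, ∀ z ∈ layer u, x ≤ y → z * x ≤ z * y) ∧
    -- discreteness: lower covers
    (∀ x ∈ layer u, ∃ p ∈ layer u, p < x ∧ ∀ z ∈ layer u, z < x → z ≤ p) ∧
    -- discreteness: upper covers
    (∀ x ∈ layer u, ∃ s ∈ layer u, x < s ∧ ∀ z ∈ layer u, x < z → s ≤ z) := by
  refine ⟨fun x hx y hy => FLe.mul_mem h hu hni hx hy,
    FLe.u_mem hu,
    fun x hx => FLe.layer_unit hu.1 hx,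
    fun x hx => ⟨FLe.inv_mem h hu hni hx, FLe.key h hu hni hx⟩,
    fun x _ y _ z _ hxy => FLe.mul_le_left z hxy,
    fun x hx => ?_, fun x hx => ?_⟩
  · -- lower covers
    refine ⟨x * compl u,
      FLe.mul_mem h hu hni hx (FLe.compl_u_mem h hu),
      FLe.mul_compl_lt h hu hni hx, fun z hz hzx => ?_⟩
    have hw : z * imp x u ∈ layer u :=
      FLe.mul_mem h hu hni hz (FLe.inv_mem h hu hni hx)
    have hwle : z * imp x u ≤ u := by
      calc z * imp x u ≤ x * imp x u := FLe.mul_le_right _ hzx.le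
        _ = u := FLe.key h hu hni hx
    have hwne : ¬ u ≤ z * imp x u := by
      intro hle
      exact absurd (FLe.cancel_eq h hu hni hx hz (le_antisymm hwle hle))
        (ne_of_lt hzx)
    have h5 : z * imp x u ≤ compl u := FLe.gap h hu hni hw hwne
    calc z = u * z := (FLe.layer_unit hu.1 hz).symm
      _ = z * u := mul_comm _ _
      _ = z * (x * imp x u) := by rw [FLe.key h hu hni hx]
      _ = (z * imp x u) * x := FLe.mul_rearrange _ _ _
      _ ≤ compl u * x := FLe.mul_le_right _ h5
      _ = x * compl u := mul_comm _ _
  · -- upper covers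
    have hq_mem : imp (compl u) u ∈ layer u :=
      FLe.inv_mem h hu hni (FLe.compl_u_mem h hu)
    refine ⟨x * imp (compl u) u, FLe.mul_mem h hu hni hx hq_mem, ?_, ?_⟩
    · apply not_le.mp
      intro hle
      apply FLe.q_gt h hu hni
      have hx' : imp x x = u := hx
      have h2 : imp (compl u) u ≤ imp x x := FLe.resid.mp hle
      rwa [hx'] at h2
    · intro z hz hxz
      have hw : z * imp x u ∈ layer u :=
        FLe.mul_mem h hu hni hz (FLe.inv_mem h hu hni hx)
      have hwge : u ≤ z * imp x u := by
        calc u = x * imp x u := (FLe.key h hu hni hx).symm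
          _ ≤ z * imp x u := FLe.mul_le_right _ hxz.le
      have hwne : ¬ z * imp x u ≤ u := by
        intro hle
        exact absurd (FLe.cancel_eq h hu hni hx hz (le_antisymm hle hwge))
          (ne_of_gt hxz)
      have h5 : imp (compl u) u ≤ z * imp x u := FLe.q_min h hu hni hw hwne
      calc x * imp (compl u) u = imp (compl u) u * x := mul_comm _ _
        _ ≤ (z * imp x u) * x := FLe.mul_le_right _ h5
        _ = z * (imp x u * x) := mul_assoc _ _ _
        _ = z * (x * imp x u) := by rw [mul_comm (imp x u) x]
        _ = z * u := by rw [FLe.key h hu hni hx]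
        _ = u * z := mul_comm _ _
        _ = z := FLe.layer_unit hu.1 hz
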